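/- Let A = K[x], W a 2-dimensional vector space with basis e₁, e₂, m ∈ K. Define an action of V = K[x]d/dx on M = A·e₁ ⊕ A·e₂ by (f d/dx)(g e₁) = (f g′ + (m+1) g f′) e₁ and (f d/dx)(g e₂) = (f g′ + m g f′) e₂ + (1/2) g f″ e₁. Then this is a Lie algebra action of V on M, and together with the natural A-module structure it satisfies the Leibniz rule, making M an AV-module. -/
import Mathlib


open Polynomial

/-- The action of `f d/dx` on `M = K[x]e₁ ⊕ K[x]e₂` (realized as `K[x] × K[x]`):
`(f d/dx)(g e₁) = (f g′ + (m+1) g f′) e₁`,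
`(f d/dx)(g e₂) = (f g′ + m g f′) e₂ + (1/2) g f″ e₁`. -/
noncomputable def rhoAct (K : Type*) [Field K] (m : K) (f : Polynomial K)
    (v : Polynomial K × Polynomial K) : Polynomial K × Polynomial K :=
  (f * derivative v.1 + (C m + 1) * v.1 * derivative f
      + C ((2 : K)⁻¹) * v.2 * derivative (derivative f),
   f * derivative v.2 + C m * v.2 * derivative f)

/-- The formulas above define a Lie algebra action of `V = K[x]d/dx` (with
bracket `[f d/dx, g d/dx] = (fg′ − gf′) d/dx`) on `M`, satisfying the Leibniz
rule with the `K[x]`-module structure, so `M` is an AV-module. -/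
theorem rhoAct_is_av_module (K : Type*) [Field K] [CharZero K] (m : K) :
    -- additivity and `K`-linearity in the module variable:
    (∀ (f : Polynomial K) (v w : Polynomial K × Polynomial K),
      rhoAct K m f (v + w) = rhoAct K m f v + rhoAct K m f w) ∧
    -- Lie algebra action:
    (∀ (f g : Polynomial K) (v : Polynomial K × Polynomial K),
      rhoAct K m f (rhoAct K m g v) - rhoAct K m g (rhoAct K m f v)
        = rhoAct K m (f * derivative g - g * derivative f) v) ∧
    -- Leibniz rule with the `A = K[x]`-action:
    (∀ (f a : Polynomial K) (v : Polynomial K × Polynomial K),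
      rhoAct K m f (a • v) = (f * derivative a) • v + a • rhoAct K m f v) := by
  refine ⟨?_, ?_, ?_⟩
  · intro f v w
    refine Prod.ext ?_ ?_ <;>
    · simp only [rhoAct, Prod.fst_add, Prod.snd_add, derivative_add]
      ring
  · intro f g v
    refine Prod.ext ?_ ?_ <;>
    · simp only [rhoAct, derivative_mul, derivative_add, derivative_sub, derivative_C, derivative_one, Prod.fst_sub,
        Prod.snd_sub]
      ring
  · intro f a v
    refine Prod.ext ?_ ?_ <;>
    · simp only [rhoAct, Prod.smul_fst, Prod.smul_snd, Prod.fst_add, Prod.snd_add,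
        derivative_mul, smul_eq_mul]
      ring
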